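/- Let k be a commutative ring with distinguished elements x, y, let m ≥ 3 be odd, and suppose the two-colored quantum number [m]x = 0 (for m odd, [m]x = [m]y). Then [m−1]x · [m−1]y = 1, and x and y are invertible in k. -/

import Mathlib

/-- The pair of two-colored quantum numbers `([n]x, [n]y)` attached to `x, y ∈ k`:
`[0]x = [0]y = 0`, `[1]x = [1]y = 1`, `[n+1]x = x·[n]y − [n−1]x`,
`[n+1]y = y·[n]x − [n−1]y`. -/
def tq {k : Type*} [CommRing k] (x y : k) : ℕ → k × k
  | 0 => (0, 0)
  | 1 => (1, 1)
  | n + 2 => (x * (tq x y (n + 1)).2 - (tq x y n).1,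
              y * (tq x y (n + 1)).1 - (tq x y n).2)

/-- The two-colored quantum number `[n]x`. -/
def qnx {k : Type*} [CommRing k] (x y : k) (n : ℕ) : k := (tq x y n).1

/-- The two-colored quantum number `[n]y`. -/
def qny {k : Type*} [CommRing k] (x y : k) (n : ℕ) : k := (tq x y n).2

/-!
Write `D n = [n+1]x [n+1]y − [n+2]x [n]y`. Expanding `[n+3]x` and `[n+2]x` by the recursion
shows that `D (n+1)` equals the colour-swapped `D n`, so `D n = D 0 = 1` for all `n`.
For `m = 2j+1` with `[m]x = 0` this gives `[2j]x [2j]y = 1`, and since `x ∣ [2j]x` and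
`y ∣ [2j]y` (even quantum numbers are multiples of `[2]`), both `x` and `y` are units.
-/

namespace TwoColoredQuantum

variable {k : Type*} [CommRing k] (x y : k)

@[simp] lemma qnx_zero : qnx x y 0 = 0 := rfl
@[simp] lemma qny_zero : qny x y 0 = 0 := rfl
@[simp] lemma qnx_one : qnx x y 1 = 1 := rfl
@[simp] lemma qny_one : qny x y 1 = 1 := rfl

lemma qnx_add_two (n : ℕ) : qnx x y (n + 2) = x * qny x y (n + 1) - qnx x y n := rfl

lemma tq_swap : ∀ n, tq y x n = (tq x y n).swap
  | 0 => rfl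
  | 1 => rfl
  | n + 2 => by simp only [tq, tq_swap (n + 1), tq_swap n, Prod.fst_swap, Prod.snd_swap,
      Prod.swap_prod_mk]

lemma qny_eq_qnx_swap (n : ℕ) : qny x y n = qnx y x n := by
  rw [qnx, tq_swap, Prod.fst_swap, qny]

lemma qnx_succ_mul_qny_succ_sub_qnx_add_two_mul_qny (n : ℕ) :
    qnx x y (n + 1) * qny x y (n + 1) - qnx x y (n + 2) * qny x y n = 1 := by
  induction n generalizing x y with
  | zero => simp [qnx_add_two]
  | succ n ih =>
    have ih' := ih y x
    simp only [← qny_eq_qnx_swap x y, qny_eq_qnx_swap y x] at ih'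
    linear_combination ih' + qny x y (n + 2) * qnx_add_two x y n -
      qny x y (n + 1) * qnx_add_two x y (n + 1)

lemma dvd_qnx_two_mul (j : ℕ) : x ∣ qnx x y (2 * j) := by
  induction j with
  | zero => simp
  | succ j ih =>
    rw [Nat.mul_succ, qnx_add_two]
    exact (dvd_mul_right x _).sub ih

lemma dvd_qny_two_mul (j : ℕ) : y ∣ qny x y (2 * j) := by
  rw [qny_eq_qnx_swap]
  exact dvd_qnx_two_mul y x j

lemma qnx_mul_qny_eq_one_of_qnx_add_one_eq_zero {n : ℕ} (hn : n ≠ 0)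
    (h0 : qnx x y (n + 1) = 0) : qnx x y n * qny x y n = 1 := by
  obtain ⟨n, rfl⟩ := Nat.exists_eq_succ_of_ne_zero hn
  simpa [h0] using qnx_succ_mul_qny_succ_sub_qnx_add_two_mul_qny x y n

end TwoColoredQuantum

open TwoColoredQuantum in
theorem odd_vanishing_invertibility_general {k : Type*} [CommRing k] (x y : k) (m : ℕ)
    (hodd : Odd m) (h0 : qnx x y m = 0) :
    qnx x y (m - 1) * qny x y (m - 1) = 1 ∧ IsUnit x ∧ IsUnit y := by
  obtain ⟨j, rfl⟩ := hodd
  rcases j with _ | j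
  · -- `[1]x = 1`, so `k` is the zero ring
    have : Subsingleton k := subsingleton_of_zero_eq_one (by simpa using h0.symm)
    exact ⟨Subsingleton.elim _ _, isUnit_of_subsingleton x, isUnit_of_subsingleton y⟩
  rw [Nat.add_sub_cancel]
  have hdet := qnx_mul_qny_eq_one_of_qnx_add_one_eq_zero x y (by omega) h0
  exact ⟨hdet, isUnit_of_dvd_one (((dvd_qnx_two_mul x y _).mul_right _).trans hdet.dvd),
    isUnit_of_dvd_one (((dvd_qny_two_mul x y _).mul_left _).trans hdet.dvd)⟩

/-- If `m ≥ 3` is odd and `[m]x = 0` (for odd `m`, `[m]x = [m]y`), then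
`[m−1]x · [m−1]y = 1` and `x` and `y` are invertible in `k`. -/
theorem odd_vanishing_invertibility {k : Type*} [CommRing k] (x y : k) (m : ℕ)
    (hm : 3 ≤ m) (hodd : Odd m) (h0 : qnx x y m = 0) :
    qnx x y (m - 1) * qny x y (m - 1) = 1 ∧ IsUnit x ∧ IsUnit y :=
  odd_vanishing_invertibility_general x y m hodd h0
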